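/- Let u_k and v_k be the Lucas sequences of the first and second kind with complex parameters y, z. For all complex x, y, z, r and natural numbers n, the sum over k from 0 to n of r^(n-k) * x^k * (r * v_k + (x*y - 2*r) * u_{k+1}) equals x^(n+1) * y * u_{n+1} (using that u_0 = 0). -/
import Mathlib


open Finset

noncomputable def lucasU (y z : ℂ) : ℕ → ℂ
  | 0 => 0
  | 1 => 1
  | n + 2 => y * lucasU y z (n + 1) - z * lucasU y z n

noncomputable def lucasV (y z : ℂ) : ℕ → ℂ
  | 0 => 2
  | 1 => y
  | n + 2 => y * lucasV y z (n + 1) - z * lucasV y z n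

lemma lucasV_eq (y z : ℂ) : ∀ n, lucasV y z n = 2 * lucasU y z (n + 1) - y * lucasU y z n
  | 0 => by simp [lucasU, lucasV]
  | 1 => by simp [lucasU, lucasV]; ring
  | n + 2 => by
    rw [show n + 2 + 1 = n + 1 + 2 from rfl]
    simp only [lucasU, lucasV, lucasV_eq y z (n + 1), lucasV_eq y z n]
    ring

theorem stmt4 (x y z r : ℂ) (n : ℕ) :
    ∑ k ∈ Finset.range (n + 1),
        r ^ (n - k) * x ^ k * (r * lucasV y z k + (x * y - 2 * r) * lucasU y z (k + 1)) =
      x ^ (n + 1) * y * lucasU y z (n + 1) := by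
  induction n with
  | zero => simp [lucasU, lucasV]; ring
  | succ n ih =>
    rw [Finset.sum_range_succ]
    have h : ∀ k ∈ Finset.range (n + 1),
        r ^ (n + 1 - k) * x ^ k * (r * lucasV y z k + (x * y - 2 * r) * lucasU y z (k + 1)) =
        r * (r ^ (n - k) * x ^ k * (r * lucasV y z k + (x * y - 2 * r) * lucasU y z (k + 1))) := by
      intro k hk
      rw [Finset.mem_range] at hk
      rw [show n + 1 - k = (n - k) + 1 by omega, pow_succ]
      ring
    rw [Finset.sum_congr rfl h, ← Finset.mul_sum, ih, Nat.sub_self,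
      lucasV_eq y z (n + 1), show n + 1 + 1 = n + 2 from rfl]
    ring
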